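/- arXiv:2306.11923 — 2 statements merged into one kernel-verified Lean document; each statement's English description precedes it below -/
import Mathlib

section
/- If a choice correspondence c satisfies Axiom ρ, then for every nonempty A ⊆ X, if x ∈ A and x ∈ c({x,y}) for all y ∈ A, then x ∈ c(A). (Proved by induction on the cardinality of A.) -/
theorem axiom_rho_undominated_is_chosen
    {X : Type*} [Fintype X] [DecidableEq X] [Nonempty X]
    (c : Finset X → Finset X)
    (hsub : ∀ A : Finset X, c A ⊆ A)
    (hne : ∀ A : Finset X, A.Nonempty → (c A).Nonempty)
    (hrho : ∀ (x y : X) (B : Finset X),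
        (x ∈ c {x, y} ∧ x ∈ c (insert x B)) ↔ x ∈ c (insert x (insert y B))) :
    ∀ A : Finset X, A.Nonempty → ∀ x ∈ A, (∀ y ∈ A, x ∈ c {x, y}) → x ∈ c A := by
  intro A
  induction A using Finset.strongInduction with
  | _ A ih =>
    intro hA x hx hpair
    by_cases h1 : A = {x}
    · subst h1
      obtain ⟨z, hz⟩ := hne {x} ⟨x, by simp⟩
      have hzx := hsub {x} hz
      simp only [Finset.mem_singleton] at hzx
      subst hzx
      exact hz
    · obtain ⟨y, hy, hyx⟩ : ∃ y ∈ A, y ≠ x := by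
        by_contra h
        push_neg at h
        exact h1 (Finset.eq_singleton_iff_unique_mem.mpr ⟨hx, fun z hz => h z hz⟩)
      set B := (A.erase x).erase y with hB
      have hxy : x ≠ y := hyx.symm
      have hAy : A.erase y = insert x B := by
        ext z
        simp only [hB, Finset.mem_erase, Finset.mem_insert]
        constructor
        · rintro ⟨hzy, hzA⟩
          by_cases hzx : z = x
          · exact Or.inl hzx
          · exact Or.inr ⟨hzy, hzx, hzA⟩
        · rintro (rfl | ⟨h2, h3, h4⟩)
          · exact ⟨hxy, hx⟩
          · exact ⟨h2, h4⟩
      have hA' : A = insert x (insert y B) := by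
        rw [Finset.insert_comm, ← hAy, Finset.insert_erase hy]
      have hxey : x ∈ A.erase y := Finset.mem_erase.mpr ⟨hxy, hx⟩
      have hIH : x ∈ c (A.erase y) := by
        refine ih (A.erase y) (Finset.erase_ssubset hy) ⟨x, hxey⟩ x hxey ?_
        intro z hz
        exact hpair z (Finset.mem_of_mem_erase hz)
      rw [hAy] at hIH
      rw [hA']
      exact (hrho x y B).mp ⟨hpair y hy, hIH⟩
end

section
/- If a choice correspondence c satisfies both Axiom τ and Axiom ρ, then c satisfies WARP in the following form: for all nonempty sets A, B ⊆ X and all x, y ∈ A ∩ B, if x ∈ c(A) and y ∈ c(B), then x ∈ c(B). -/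
theorem tau_rho_imply_WARP
    {X : Type*} [Fintype X] [DecidableEq X] [Nonempty X]
    (c : Finset X → Finset X)
    (hsub : ∀ A : Finset X, c A ⊆ A)
    (hne : ∀ A : Finset X, A.Nonempty → (c A).Nonempty)
    (htau : ∀ x y z : X, z ∈ c {z, y} → c {x, z} = {x} → c {x, y} = {x})
    (hrho : ∀ (x y : X) (B : Finset X),
        (x ∈ c {x, y} ∧ x ∈ c (insert x B)) ↔ x ∈ c (insert x (insert y B))) :
    ∀ A B : Finset X, A.Nonempty → B.Nonempty → ∀ x y : X,
      x ∈ A → x ∈ B → y ∈ A → y ∈ B → x ∈ c A → y ∈ c B → x ∈ c B := by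
  -- singleton choice
  have hsingle : ∀ x : X, x ∈ c {x} := by
    intro x
    obtain ⟨a, ha⟩ := hne {x} (Finset.singleton_nonempty x)
    have h := hsub {x} ha
    simp only [Finset.mem_singleton] at h
    subst h
    exact ha
  -- characterization via ρ
  have hchar : ∀ (B : Finset X) (x : X),
      x ∈ c (insert x B) ↔ ∀ y ∈ B, x ∈ c {x, y} := by
    intro B x
    induction B using Finset.induction_on with
    | empty => simpa using hsingle x
    | @insert a s hns ih =>
      constructor
      · intro hx y hy
        rw [← hrho x a s] at hx
        rcases Finset.mem_insert.mp hy with rfl | hy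
        · exact hx.1
        · exact (ih.mp hx.2) y hy
      · intro h
        rw [← hrho x a s]
        exact ⟨h a (Finset.mem_insert_self a s),
          ih.mpr fun y hy => h y (Finset.mem_insert_of_mem hy)⟩
  have hcharA : ∀ (A : Finset X) (x : X), x ∈ A →
      (x ∈ c A ↔ ∀ y ∈ A, x ∈ c {x, y}) := by
    intro A x hx
    have hins : insert x A = A := Finset.insert_eq_self.mpr hx
    constructor
    · intro h y hy
      exact (hchar A x).mp (by rwa [hins]) y hy
    · intro h
      rw [← hins]
      exact (hchar A x).mpr h
  intro A B hA hB x y hxA hxB hyA hyB hxcA hycB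
  rw [hcharA B x hxB]
  intro z hzB
  have hxy : x ∈ c {x, y} := (hcharA A x hxA).mp hxcA y hyA
  have hyz : y ∈ c {y, z} := (hcharA B y hyB).mp hycB z hzB
  by_contra hxz
  by_cases hxez : x = z
  · subst hxez
    apply hxz
    have h1 : ({x, x} : Finset X) = {x} := by simp
    rw [h1]; exact hsingle x
  have hcxz : c {x, z} = {z} := by
    obtain ⟨a, ha⟩ := hne {x, z} (by simp)
    apply Finset.eq_singleton_iff_nonempty_unique_mem.mpr
    refine ⟨⟨a, ha⟩, ?_⟩
    intro b hb
    have hb' := hsub {x, z} hb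
    rcases Finset.mem_insert.mp hb' with rfl | h
    · exact absurd hb hxz
    · simpa using h
  · have hczx : c {z, x} = {z} := by rwa [Finset.pair_comm]
    have hzy : c {z, y} = {z} := htau z y x hxy hczx
    have hy : y ∈ ({z} : Finset X) := by
      rw [← hzy, Finset.pair_comm]; exact hyz
    have hyez : y = z := Finset.mem_singleton.mp hy
    subst hyez
    exact hxz hxy
end
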